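/- Let n > 4. In the Artin braid group B_n, the normal closure of the single element σ₃σ₁⁻¹ (the smallest normal subgroup of B_n containing σ₃σ₁⁻¹) equals the commutator subgroup B_n' = [B_n, B_n]. -/

import Mathlib

/-- The defining relations of the Artin braid group: commutation `σᵢσⱼ = σⱼσᵢ` for `|i−j| ≥ 2`
and the braid relations `σᵢσᵢ₊₁σᵢ = σᵢ₊₁σᵢσᵢ₊₁`, written as elements of the free group on
generators indexed by `Fin m`. -/
def braidRels (m : ℕ) : Set (FreeGroup (Fin m)) :=
  { r | (∃ i j : Fin m, i.val + 2 ≤ j.val ∧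
          r = FreeGroup.of i * FreeGroup.of j * (FreeGroup.of i)⁻¹ * (FreeGroup.of j)⁻¹) ∨
        (∃ i j : Fin m, i.val + 1 = j.val ∧
          r = FreeGroup.of i * FreeGroup.of j * FreeGroup.of i *
              (FreeGroup.of j * FreeGroup.of i * FreeGroup.of j)⁻¹) }

/-- The Artin braid group `B_n`, presented with generators `σ₁, …, σ_{n−1}`
(indexed by `Fin (n-1)`) and the braid relations. -/
abbrev BraidGroup (n : ℕ) := PresentedGroup (braidRels (n - 1))

/-- The generator `σ_{i+1}` of the braid group `B_n`, for `i : Fin (n-1)`. -/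
def braidσ {n : ℕ} (i : Fin (n - 1)) : BraidGroup n := PresentedGroup.of i

/-- The braid relation holds in the braid group. -/
lemma braid_rel_holds {m : ℕ} (i j : Fin m) (h : i.val + 1 = j.val) :
    (PresentedGroup.of i : PresentedGroup (braidRels m)) * PresentedGroup.of j *
        PresentedGroup.of i =
      PresentedGroup.of j * PresentedGroup.of i * PresentedGroup.of j := by
  have hr : (FreeGroup.of i * FreeGroup.of j * FreeGroup.of i *
      (FreeGroup.of j * FreeGroup.of i * FreeGroup.of j)⁻¹ : FreeGroup (Fin m)) ∈ braidRels m :=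
    Or.inr ⟨i, j, h, rfl⟩
  have h1 : PresentedGroup.mk (braidRels m) (FreeGroup.of i * FreeGroup.of j * FreeGroup.of i *
      (FreeGroup.of j * FreeGroup.of i * FreeGroup.of j)⁻¹) = 1 :=
    (QuotientGroup.eq_one_iff _).2 (Subgroup.subset_normalClosure hr)
  simp only [map_mul, map_inv, mul_inv_eq_one] at h1
  exact h1

/-- The commutation relation holds in the braid group. -/
lemma comm_rel_holds {m : ℕ} (i j : Fin m) (h : i.val + 2 ≤ j.val) :
    (PresentedGroup.of i : PresentedGroup (braidRels m)) * PresentedGroup.of j =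
      PresentedGroup.of j * PresentedGroup.of i := by
  have hr : (FreeGroup.of i * FreeGroup.of j * (FreeGroup.of i)⁻¹ *
      (FreeGroup.of j)⁻¹ : FreeGroup (Fin m)) ∈ braidRels m :=
    Or.inl ⟨i, j, h, rfl⟩
  have h1 : PresentedGroup.mk (braidRels m) (FreeGroup.of i * FreeGroup.of j *
      (FreeGroup.of i)⁻¹ * (FreeGroup.of j)⁻¹) = 1 :=
    (QuotientGroup.eq_one_iff _).2 (Subgroup.subset_normalClosure hr)
  simp only [map_mul, map_inv] at h1
  rw [mul_inv_eq_one, mul_inv_eq_iff_eq_mul] at h1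
  exact h1

/-- For `n > 4`, the normal closure of the single element `σ₃σ₁⁻¹` in the Artin braid group
`B_n` equals the commutator subgroup `B_n' = [B_n, B_n]`. -/
theorem normalClosure_sigma3_sigma1_inv_eq_commutator (n : ℕ) (hn : 4 < n) :
    Subgroup.normalClosure
        {braidσ (n := n) ⟨2, by omega⟩ * (braidσ (n := n) ⟨0, by omega⟩)⁻¹} =
      commutator (BraidGroup n) := by
  have hm : 4 ≤ n - 1 := by omega
  set x : BraidGroup n := braidσ (n := n) ⟨2, by omega⟩ * (braidσ (n := n) ⟨0, by omega⟩)⁻¹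
    with hx
  apply le_antisymm
  · -- normal closure ≤ commutator
    apply Subgroup.normalClosure_le_normal
    rw [Set.singleton_subset_iff]
    -- show x ∈ commutator via abelianization
    have : Abelianization.of x = 1 := by
      -- in the abelianization all generators are equal
      have key : ∀ i j : Fin (n - 1), i.val + 1 = j.val →
          Abelianization.of (braidσ (n := n) i) = Abelianization.of (braidσ (n := n) j) := by
        intro i j hij
        have := congrArg Abelianization.of (braid_rel_holds i j hij)
        simp only [map_mul] at this
        set a := Abelianization.of (braidσ (n := n) i)
        set b := Abelianization.of (braidσ (n := n) j)
        have h2 : a * b * a = b * a * b := this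
        have h3 : a * b * a = a * b * b := by rw [h2, mul_comm b a]
        exact mul_left_cancel h3
      have e01 : Abelianization.of (braidσ (n := n) ⟨0, by omega⟩) =
          Abelianization.of (braidσ (n := n) ⟨1, by omega⟩) := key _ _ rfl
      have e12 : Abelianization.of (braidσ (n := n) ⟨1, by omega⟩) =
          Abelianization.of (braidσ (n := n) ⟨2, by omega⟩) := key _ _ rfl
      rw [hx, map_mul, map_inv, ← e12, ← e01, mul_inv_cancel]
    exact (QuotientGroup.eq_one_iff x).1 this
  · -- commutator ≤ normal closure
    set N := Subgroup.normalClosure ({x} : Set (BraidGroup n))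
    haveI : N.Normal := Subgroup.normalClosure_normal
    rw [commutator_def, Subgroup.commutator_le]
    intro g _ h _
    -- it suffices that the quotient is commutative
    set f := QuotientGroup.mk' N
    set t : Fin (n - 1) → BraidGroup n ⧸ N := fun i => f (braidσ i) with ht
    have hbr : ∀ i j : Fin (n - 1), i.val + 1 = j.val → t i * t j * t i = t j * t i * t j := by
      intro i j hij
      have := congrArg f (braid_rel_holds i j hij)
      simp only [map_mul] at this; exact this
    have hcm : ∀ i j : Fin (n - 1), i.val + 2 ≤ j.val → t i * t j = t j * t i := by
      intro i j hij
      have := congrArg f (comm_rel_holds i j hij)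
      simp only [map_mul] at this; exact this
    have h20 : t ⟨2, by omega⟩ = t ⟨0, by omega⟩ := by
      have hx1 : f x = 1 := (QuotientGroup.eq_one_iff x).2
        (Subgroup.subset_normalClosure rfl)
      rw [hx, map_mul, map_inv, mul_inv_eq_one] at hx1
      exact hx1
    -- general step: if t k = t 0 and 1 ≤ k then t (k+1) = t 0
    have hstep : ∀ k : ℕ, ∀ hk1 : k + 1 < n - 1, 1 ≤ k →
        t ⟨k, by omega⟩ = t ⟨0, by omega⟩ → t ⟨k + 1, hk1⟩ = t ⟨0, by omega⟩ := by
      intro k hk1 hk hk0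
      have hc : t ⟨0, by omega⟩ * t ⟨k + 1, hk1⟩ = t ⟨k + 1, hk1⟩ * t ⟨0, by omega⟩ :=
        hcm _ _ (by show 0 + 2 ≤ k + 1; omega)
      have hb : t ⟨k, by omega⟩ * t ⟨k + 1, hk1⟩ * t ⟨k, by omega⟩ =
          t ⟨k + 1, hk1⟩ * t ⟨k, by omega⟩ * t ⟨k + 1, hk1⟩ := hbr _ _ rfl
      rw [hk0, hc] at hb
      -- hb : (t(k+1) * t0) * t0 = (t(k+1) * t0) * t(k+1)
      exact (mul_left_cancel hb).symm
    have h30 : t ⟨3, by omega⟩ = t ⟨0, by omega⟩ := hstep 2 (by omega) (by omega) h20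
    have h10 : t ⟨1, by omega⟩ = t ⟨0, by omega⟩ := by
      have hc13 : t ⟨1, by omega⟩ * t ⟨3, by omega⟩ = t ⟨3, by omega⟩ * t ⟨1, by omega⟩ :=
        hcm _ _ (by show 1 + 2 ≤ 3; omega)
      rw [h30] at hc13
      -- t1 commutes with t0
      have hb : t ⟨0, by omega⟩ * t ⟨1, by omega⟩ * t ⟨0, by omega⟩ =
          t ⟨1, by omega⟩ * t ⟨0, by omega⟩ * t ⟨1, by omega⟩ := hbr _ _ rfl
      rw [show (t ⟨0, by omega⟩ * t ⟨1, by omega⟩ : BraidGroup n ⧸ N) =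
        t ⟨1, by omega⟩ * t ⟨0, by omega⟩ from hc13.symm] at hb
      exact mul_left_cancel hb.symm
    have hall : ∀ i : Fin (n - 1), t i = t ⟨0, by omega⟩ := by
      have key : ∀ k : ℕ, ∀ hk : k < n - 1, t ⟨k, hk⟩ = t ⟨0, by omega⟩ := by
        intro k
        induction k with
        | zero => intro _; rfl
        | succ m ih =>
          intro hk
          match m, ih with
          | 0, _ => exact h10
          | 1, _ => exact h20
          | (m + 1), ih => exact hstep (m + 1) hk (by omega) (ih (by omega))
      intro i
      have := key i.val i.isLt
      simpa using this
    -- the quotient is generated by t0, hence commutative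
    have hgen : Subgroup.closure ({t ⟨0, by omega⟩} : Set (BraidGroup n ⧸ N)) = ⊤ := by
      rw [eq_top_iff]
      have h1 : Subgroup.map f ⊤ = ⊤ :=
        Subgroup.map_top_of_surjective f (QuotientGroup.mk'_surjective N)
      rw [← h1, ← PresentedGroup.closure_range_of (braidRels (n - 1)),
        MonoidHom.map_closure]
      apply Subgroup.closure_mono
      rintro y ⟨z, ⟨i, rfl⟩, rfl⟩
      exact Set.mem_singleton_iff.2 (hall i)
    have hcenter : ∀ y : BraidGroup n ⧸ N, y ∈ Subgroup.center (BraidGroup n ⧸ N) := by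
      have ht0 : t ⟨0, by omega⟩ ∈ Subgroup.center (BraidGroup n ⧸ N) := by
        rw [Subgroup.mem_center_iff]
        intro g
        have hg : g ∈ Subgroup.closure ({t ⟨0, by omega⟩} : Set (BraidGroup n ⧸ N)) := by
          rw [hgen]; trivial
        induction hg using Subgroup.closure_induction with
        | mem z hz => rw [Set.mem_singleton_iff.1 hz]
        | one => simp
        | mul a b _ _ ha hb => rw [mul_assoc, hb, ← mul_assoc, ha, mul_assoc]
        | inv a _ ha => exact (Commute.inv_left ha)
      intro y
      have hy : y ∈ Subgroup.closure ({t ⟨0, by omega⟩} : Set (BraidGroup n ⧸ N)) := by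
        rw [hgen]; trivial
      exact Subgroup.closure_le (Subgroup.center _) |>.2
        (Set.singleton_subset_iff.2 ht0) hy
    have hcomm : f g * f h = f h * f g := Subgroup.mem_center_iff.1 (hcenter (f h)) (f g)
    have hone : f (open scoped commutatorElement in ⁅g, h⁆) = 1 := by
      rw [map_commutatorElement, commutatorElement_eq_one_iff_mul_comm]
      exact hcomm
    exact (QuotientGroup.eq_one_iff _).1 hone
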